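/- Let θ, η ∈ ℝ with θ/π irrational and sin η ≠ 0, and let λ > 0 with λ ≠ 1. Let A = [[cos θ, sin θ], [−sin θ, cos θ]] and B' = D · [[cos η, sin η], [−sin η, cos η]] · D⁻¹ where D = [[λ, 0], [0, λ⁻¹]], regarded as elements of SL(2, ℝ). Then there exists an integer n with trace(Aⁿ · B') < −2; in particular Aⁿ · B' has no fixed point in the upper half-plane ℍ under the Möbius action of SL(2, ℝ). -/

import Mathlib

open Real Matrix
open scoped MatrixGroups UpperHalfPlane

/-! Writing `R_t` for the rotation by `t`, conjugating `R_η` by `diag(l, l⁻¹)` gives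
`trace (R_t * B') = 2 cos η cos t - (l² + l⁻²) sin η sin t`. This is a sinusoid in `t` whose
amplitude exceeds `2` because `l² + l⁻² > 2` and `sin η ≠ 0`, so it is `< -2` on a nonempty open
set. As `θ / 2π` is irrational, the multiples `nθ` are dense modulo `2π`, and `Aⁿ = R_{nθ}` for
some `n` lands in that set. A hyperbolic element is neither scalar nor elliptic, so it fixes no
point of `ℍ`. -/

namespace UpperHalfPlane

theorem gl_smul_ne_self_of_four_det_lt_trace_sq {g : GL (Fin 2) ℝ} (hdet : 0 < g.val.det)
    (htr : 4 * g.val.det < g.val.trace ^ 2) (z : ℍ) : g • z ≠ z := by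
  intro hz
  by_cases hg : g ∈ Subgroup.center (GL (Fin 2) ℝ)
  · obtain ⟨a, ha⟩ := GeneralLinearGroup.mem_center_iff_val_mem_range_scalar.mp hg
    norm_num [← ha, mul_pow] at htr
  · have hell : g.val.discr < 0 := isElliptic_of_exists_smul_eq_self hdet hg ⟨z, hz⟩
    rw [discr_fin_two] at hell
    linarith

theorem sl_smul_ne_self_of_two_lt_abs_trace {g : SL(2, ℝ)} (htr : 2 < |g.val.trace|) (z : ℍ) :
    g • z ≠ z := by
  have htr_sq : 4 < g.val.trace ^ 2 := by nlinarith [sq_abs g.val.trace, abs_nonneg g.val.trace]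
  rw [MulAction.compHom_smul_def]
  exact gl_smul_ne_self_of_four_det_lt_trace_sq (by simp) (by simpa using htr_sq) z

end UpperHalfPlane

theorem exists_mul_cos_add_mul_sin_eq_neg_sqrt (a b : ℝ) :
    ∃ t, a * cos t + b * sin t = -√(a ^ 2 + b ^ 2) := by
  set w : ℂ := ⟨a, b⟩
  have hw : ‖w‖ = √(a ^ 2 + b ^ 2) := by simp [Complex.norm_def, Complex.normSq_apply, w, sq]
  refine ⟨w.arg + π, ?_⟩
  have ha : ‖w‖ * cos w.arg = a := Complex.norm_mul_cos_arg w
  have hb : ‖w‖ * sin w.arg = b := Complex.norm_mul_sin_arg w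
  rw [cos_add_pi, sin_add_pi, ← hw, ← ha, ← hb]
  linear_combination -‖w‖ * sin_sq_add_cos_sq w.arg

theorem exists_mul_cos_add_mul_sin_lt_neg_two {a b : ℝ} (h : 4 < a ^ 2 + b ^ 2) :
    ∃ t, a * cos t + b * sin t < -2 := by
  obtain ⟨t, ht⟩ := exists_mul_cos_add_mul_sin_eq_neg_sqrt a b
  refine ⟨t, ?_⟩
  rw [ht, neg_lt_neg_iff, Real.lt_sqrt zero_le_two]
  linarith

theorem Function.Periodic.exists_int_mul_mem_of_irrational {α : Type*} [TopologicalSpace α]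
    {f : ℝ → α} {p θ t : ℝ} {U : Set α} (hf : Continuous f) (hp : Function.Periodic f p)
    (hθ : Irrational (θ / p)) (hU : IsOpen U) (ht : f t ∈ U) : ∃ n : ℤ, f (n * θ) ∈ U := by
  obtain ⟨x, hx, hxU⟩ :=
    (dense_addSubgroupClosure_pair_iff.mpr hθ).exists_mem_open (hU.preimage hf) ⟨t, ht⟩
  obtain ⟨m, k, rfl⟩ := AddSubgroup.mem_closure_pair.mp hx
  refine ⟨m, ?_⟩
  simpa [zsmul_eq_mul, (hp.int_mul k) _] using hxU

theorem two_lt_sq_add_inv_sq {l : ℝ} (hl : 0 < l) (hl1 : l ≠ 1) : 2 < l ^ 2 + l⁻¹ ^ 2 := by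
  have hinv : l * l⁻¹ = 1 := mul_inv_cancel₀ hl.ne'
  have hne : l - l⁻¹ ≠ 0 := by
    intro h
    have hsq : l * l = 1 := by rwa [← sub_eq_zero.mp h] at hinv
    exact hl1 ((mul_self_eq_one_iff.mp hsq).resolve_right (by linarith))
  nlinarith [sq_pos_of_ne_zero hne]

noncomputable def rotationSL (t : ℝ) : SL(2, ℝ) :=
  ⟨!![cos t, sin t; -sin t, cos t], by simp [det_fin_two, ← sq, cos_sq_add_sin_sq]⟩

@[simp]
theorem coe_rotationSL (t : ℝ) :
    (rotationSL t : Matrix (Fin 2) (Fin 2) ℝ) = !![cos t, sin t; -sin t, cos t] := rfl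

theorem rotationSL_add (s t : ℝ) : rotationSL (s + t) = rotationSL s * rotationSL t := by
  ext i j
  fin_cases i <;> fin_cases j <;> simp [cos_add, sin_add] <;> ring

theorem rotationSL_zpow (t : ℝ) (n : ℤ) : rotationSL t ^ n = rotationSL (n * t) := by
  let φ : Multiplicative ℝ →* SL(2, ℝ) :=
    MonoidHom.mk' (fun x ↦ rotationSL x.toAdd) fun _ _ ↦ rotationSL_add _ _
  simpa [φ, ← zsmul_eq_mul] using (map_zpow φ (.ofAdd t) n).symm

theorem trace_rotationSL_mul_diag_conj {l : ℝ} (hl : l ≠ 0) (t η : ℝ) (D : SL(2, ℝ))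
    (hD : (D : Matrix (Fin 2) (Fin 2) ℝ) = !![l, 0; 0, l⁻¹]) :
    trace ((rotationSL t * (D * rotationSL η * D⁻¹) : SL(2, ℝ)) : Matrix (Fin 2) (Fin 2) ℝ) =
      2 * cos η * cos t - (l ^ 2 + l⁻¹ ^ 2) * sin η * sin t := by
  simp [hD, adjugate_fin_two, trace_fin_two, field]
  ring

theorem four_lt_sq_two_mul_cos_add_sq_mul_sin {c η : ℝ} (hc : 2 < c) (hη : sin η ≠ 0) :
    4 < (2 * cos η) ^ 2 + (c * sin η) ^ 2 := by
  have hsum : (2 * cos η) ^ 2 + (c * sin η) ^ 2 = 4 + (c ^ 2 - 4) * sin η ^ 2 := by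
    linear_combination 4 * cos_sq_add_sin_sq η
  rw [hsum]
  nlinarith [mul_pos (by nlinarith : 0 < c ^ 2 - 4) (sq_pos_of_ne_zero hη)]

/-- For `A` the rotation by `θ` and `B' = D·R·D⁻¹` in `SL(2, ℝ)`, where `R` is the rotation
by `η` and `D = diag(λ, λ⁻¹)`, with `θ/π` irrational, `sin η ≠ 0`, `λ > 0`, `λ ≠ 1`:
there is an integer `n` with `trace(Aⁿ·B') < −2`; in particular `Aⁿ·B'` has no fixed point in
the upper half-plane `ℍ` under the Möbius action of `SL(2, ℝ)`. -/
theorem exists_pow_mul_trace_lt_neg_two (θ η l : ℝ)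
    (hθ : Irrational (θ / π)) (hη : sin η ≠ 0) (hl : 0 < l) (hl1 : l ≠ 1)
    (A D R : SL(2, ℝ))
    (hA : (A : Matrix (Fin 2) (Fin 2) ℝ) = !![cos θ, sin θ; -sin θ, cos θ])
    (hD : (D : Matrix (Fin 2) (Fin 2) ℝ) = !![l, 0; 0, l⁻¹])
    (hR : (R : Matrix (Fin 2) (Fin 2) ℝ) = !![cos η, sin η; -sin η, cos η]) :
    ∃ n : ℤ,
      Matrix.trace ((A ^ n * (D * R * D⁻¹) : SL(2, ℝ)) : Matrix (Fin 2) (Fin 2) ℝ) < -2 ∧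
      ∀ z : ℍ, (A ^ n * (D * R * D⁻¹)) • z ≠ z := by
  obtain rfl : A = rotationSL θ := Subtype.ext hA
  obtain rfl : R = rotationSL η := Subtype.ext hR
  obtain ⟨t, ht⟩ := exists_mul_cos_add_mul_sin_lt_neg_two (a := 2 * cos η)
    (b := -((l ^ 2 + l⁻¹ ^ 2) * sin η))
    (by simpa using four_lt_sq_two_mul_cos_add_sq_mul_sin (two_lt_sq_add_inv_sq hl hl1) hη)
  have hθ2π : Irrational (θ / (2 * π)) := by
    simpa [div_div, mul_comm] using hθ.div_natCast two_ne_zero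
  obtain ⟨n, hn⟩ := Function.Periodic.exists_int_mul_mem_of_irrational
    (f := fun x ↦ 2 * cos η * cos x + -((l ^ 2 + l⁻¹ ^ 2) * sin η) * sin x) (by fun_prop)
    (fun x ↦ by simp only [cos_add_two_pi, sin_add_two_pi]) hθ2π isOpen_Iio ht
  have htr : trace ((rotationSL θ ^ n * (D * rotationSL η * D⁻¹) : SL(2, ℝ)) :
      Matrix (Fin 2) (Fin 2) ℝ) < -2 := by
    rw [rotationSL_zpow, trace_rotationSL_mul_diag_conj hl.ne' _ η D hD]
    linarith [Set.mem_Iio.mp hn]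
  refine ⟨n, htr, UpperHalfPlane.sl_smul_ne_self_of_two_lt_abs_trace ?_⟩
  exact lt_abs.mpr (Or.inr (by linarith))
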